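/- For every integer n ≥ 2, the lower broadcast packing number of the path P_n equals n/4 if n ≡ 0 (mod 8), equals 2⌊n/8⌋ + 1 if n ≡ 1, 2 or 3 (mod 8), and equals 2⌊n/8⌋ + 2 if n ≡ 4, 5, 6 or 7 (mod 8). -/

import Mathlib

/-!
Lower bound: let `f` be a maximal packing broadcast on `P_n` of cost `σ` with `k` broadcast
vertices. If some vertex broadcasts at its eccentricity, then already `n - 1 ≤ 2σ`. Otherwise
maximality forces every ball `[v - f v, v + f v]` to touch another ball on at least one side, and
every vertex outside the balls to be the outer neighbour of a ball on a side touching nothing.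
With `p` pairs of touching balls this gives `n ≤ (2σ + k) + (2k - 2p)` and `k ≤ 2p`; since also
`k ≤ σ`, it follows that `n ≤ 4σ`, and `n ≤ 4σ - 1` when `σ` is odd.

Upper bound: radius-one balls centred at the vertices `≡ 2, 5 (mod 8)`, adjusted on the last
`n % 8` vertices, form a maximal packing of that cost; for `n ≤ 3` one vertex broadcasting at its
eccentricity `1` does. The value `(n + 4) / 8 + (n + 7) / 8` is the piecewise formula of the
theorem.
-/

open SimpleGraph

namespace Broadcast

variable {V : Type*} [Fintype V]

/-- The eccentricity of a vertex: the maximum distance from `v` to any vertex. -/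
noncomputable def ecc (G : SimpleGraph V) (v : V) : ℕ :=
  Finset.univ.sup fun u => G.dist v u

/-- A broadcast on `G`: `f v ≤ e_G(v)` for every vertex `v`. -/
def IsBroadcast (G : SimpleGraph V) (f : V → ℕ) : Prop :=
  ∀ v, f v ≤ ecc G v

/-- The cost of a broadcast. -/
def cost (f : V → ℕ) : ℕ := ∑ v, f v

/-- `hears G f u` is H_f(u): the set of f-broadcast vertices `v` with `d(u,v) ≤ f v`. -/
def hears (G : SimpleGraph V) (f : V → ℕ) (u : V) : Set V :=
  {v | 1 ≤ f v ∧ G.dist u v ≤ f v}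

/-- A dominating broadcast: every vertex hears some broadcast vertex. -/
def IsDominating (G : SimpleGraph V) (f : V → ℕ) : Prop :=
  IsBroadcast G f ∧ ∀ u, (hears G f u).Nonempty

/-- A minimal dominating broadcast. -/
def IsMinimalDominating (G : SimpleGraph V) (f : V → ℕ) : Prop :=
  IsDominating G f ∧ ∀ g, IsDominating G g → (∀ v, g v ≤ f v) → g = f

/-- The broadcast domination number γ_b: minimum cost of a dominating broadcast. -/
noncomputable def broadcastDomination (G : SimpleGraph V) : ℕ :=
  sInf {c | ∃ f, IsDominating G f ∧ cost f = c}

/-- The upper broadcast domination number Γ_b: maximum cost of a minimal dominating broadcast. -/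
noncomputable def upperBroadcastDomination (G : SimpleGraph V) : ℕ :=
  sSup {c | ∃ f, IsMinimalDominating G f ∧ cost f = c}

/-- The private f-neighborhood PN_f(v): vertices hearing only `v`. -/
def privateNbhd (G : SimpleGraph V) (f : V → ℕ) (v : V) : Set V :=
  {u | hears G f u = {v}}

open Classical in
/-- The private f-border PB_f(v). -/
noncomputable def privateBorder (G : SimpleGraph V) (f : V → ℕ) (v : V) : Set V :=
  if f v = 1 ∧ privateNbhd G f v = {v} then {v}
  else {u | u ∈ privateNbhd G f v ∧ G.dist u v = f v}

/-- An irredundant broadcast: every broadcast vertex has a nonempty private border. -/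
def IsIrredundant (G : SimpleGraph V) (f : V → ℕ) : Prop :=
  IsBroadcast G f ∧ ∀ v, 1 ≤ f v → (privateBorder G f v).Nonempty

/-- A maximal irredundant broadcast. -/
def IsMaximalIrredundant (G : SimpleGraph V) (f : V → ℕ) : Prop :=
  IsIrredundant G f ∧ ∀ g, IsIrredundant G g → (∀ v, f v ≤ g v) → g = f

/-- The upper broadcast irredundance number IR_b: maximum cost of an irredundant broadcast. -/
noncomputable def upperBroadcastIrredundance (G : SimpleGraph V) : ℕ :=
  sSup {c | ∃ f, IsIrredundant G f ∧ cost f = c}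

/-- The broadcast irredundance number ir_b: minimum cost of a maximal irredundant broadcast. -/
noncomputable def broadcastIrredundance (G : SimpleGraph V) : ℕ :=
  sInf {c | ∃ f, IsMaximalIrredundant G f ∧ cost f = c}

/-- An independent broadcast: every broadcast vertex hears only itself, i.e. |H_f(v)| = 1. -/
def IsIndependent (G : SimpleGraph V) (f : V → ℕ) : Prop :=
  IsBroadcast G f ∧ ∀ v, 1 ≤ f v → hears G f v = {v}

/-- A maximal independent broadcast. -/
def IsMaximalIndependent (G : SimpleGraph V) (f : V → ℕ) : Prop :=
  IsIndependent G f ∧ ∀ g, IsIndependent G g → (∀ v, f v ≤ g v) → g = f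

/-- The broadcast independence number β_b: maximum cost of an independent broadcast. -/
noncomputable def broadcastIndependence (G : SimpleGraph V) : ℕ :=
  sSup {c | ∃ f, IsIndependent G f ∧ cost f = c}

/-- The lower broadcast independence number i_b: minimum cost of a maximal independent broadcast. -/
noncomputable def lowerBroadcastIndependence (G : SimpleGraph V) : ℕ :=
  sInf {c | ∃ f, IsMaximalIndependent G f ∧ cost f = c}

/-- A packing broadcast: every vertex hears at most one broadcast vertex. -/
def IsPacking (G : SimpleGraph V) (f : V → ℕ) : Prop :=
  IsBroadcast G f ∧ ∀ u, (hears G f u).Subsingleton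

/-- A maximal packing broadcast. -/
def IsMaximalPacking (G : SimpleGraph V) (f : V → ℕ) : Prop :=
  IsPacking G f ∧ ∀ g, IsPacking G g → (∀ v, f v ≤ g v) → g = f

/-- The broadcast packing number P_b: maximum cost of a packing broadcast. -/
noncomputable def broadcastPacking (G : SimpleGraph V) : ℕ :=
  sSup {c | ∃ f, IsPacking G f ∧ cost f = c}

/-- The lower broadcast packing number p_b: minimum cost of a maximal packing broadcast. -/
noncomputable def lowerBroadcastPacking (G : SimpleGraph V) : ℕ :=
  sInf {c | ∃ f, IsMaximalPacking G f ∧ cost f = c}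

end Broadcast

namespace Broadcast

open Finset

section General

variable {V : Type*} {G : SimpleGraph V} {f g : V → ℕ}

lemma hears_mono (hfg : ∀ v, f v ≤ g v) (u : V) : hears G f u ⊆ hears G g u :=
  fun _ ⟨h1, h2⟩ => ⟨h1.trans (hfg _), h2.trans (hfg _)⟩

lemma mem_hears_update_of_ne [DecidableEq V] {v t : V} (htv : t ≠ v) (c : ℕ) (u : V) :
    t ∈ hears G (Function.update f v c) u ↔ t ∈ hears G f u := by
  simp only [hears, Set.mem_ofPred_eq, Function.update_of_ne htv]

variable [Fintype V]

lemma dist_le_ecc (v u : V) : G.dist v u ≤ ecc G v :=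
  le_sup (f := fun u => G.dist v u) (mem_univ u)

/-- `w` is a vertex that would hear both `v` and `t` if `f v` were raised by one. -/
theorem isMaximalPacking_iff :
    IsMaximalPacking G f ↔ IsPacking G f ∧
      ∀ v, f v < ecc G v → ∃ w, ∃ t ≠ v, t ∈ hears G f w ∧ G.dist w v ≤ f v + 1 := by
  classical
  refine ⟨fun hf => ⟨hf.1, fun v hv => ?_⟩, fun ⟨hf, hsat⟩ => ⟨hf, fun g hg hfg => ?_⟩⟩
  · set g := Function.update f v (f v + 1)
    have hfg : ∀ u, f u ≤ g u := by
      intro u; rcases eq_or_ne u v with rfl | hu <;> simp [g, *]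
    have hg : IsBroadcast G g := by
      intro u; rcases eq_or_ne u v with rfl | hu
      · simpa [g] using hv
      · simpa [g, hu] using hf.1.1 u
    have hgf : g ≠ f := fun h => by simpa [g] using congrFun h v
    have hnot : ¬ IsPacking G g := fun hg' => hgf (hf.2 g hg' hfg)
    simp only [IsPacking, hg, true_and, not_forall, Set.Subsingleton] at hnot
    obtain ⟨w, x, hx, y, hy, hxy⟩ := hnot
    have hxv : x = v ∨ y = v := by
      by_contra! h
      exact hxy (hf.1.2 w ((mem_hears_update_of_ne h.1 _ w).1 hx)
        ((mem_hears_update_of_ne h.2 _ w).1 hy))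
    rcases hxv with rfl | rfl
    · exact ⟨w, y, Ne.symm hxy, (mem_hears_update_of_ne (Ne.symm hxy) _ w).1 hy,
        by simpa [g] using hx.2⟩
    · exact ⟨w, x, hxy, (mem_hears_update_of_ne hxy _ w).1 hx, by simpa [g] using hy.2⟩
  · funext v
    by_contra hne
    have hlt : f v < g v := lt_of_le_of_ne (hfg v) (Ne.symm hne)
    obtain ⟨w, t, htv, ht, hwv⟩ := hsat v (hlt.trans_le (hg.1 v))
    exact htv (hg.2 w (hears_mono hfg w ht) ⟨by omega, by omega⟩)

theorem isMaximalPacking_single_ecc [DecidableEq V] {v : V} (hv : 1 ≤ ecc G v) :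
    IsMaximalPacking G (Pi.single v (ecc G v)) := by
  have hsupp : ∀ u w, u ∈ hears G (Pi.single v (ecc G v)) w → u = v := by
    intro u w ⟨hu, _⟩
    by_contra h
    simp [h] at hu
  refine isMaximalPacking_iff.2 ⟨⟨fun u => ?_, fun w x hx y hy => ?_⟩, fun u hu => ?_⟩
  · rcases eq_or_ne u v with rfl | h <;> simp [*]
  · exact (hsupp x w hx).trans (hsupp y w hy).symm
  · refine ⟨u, v, ?_, ⟨by simpa using hv, by simpa [dist_comm] using dist_le_ecc v u⟩, by simp⟩
    rintro rfl
    simp at hu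

/-- The paper's `V_f^+`. -/
def broadcasters (f : V → ℕ) : Finset V := {v | 1 ≤ f v}

lemma sum_broadcasters (f : V → ℕ) : ∑ v ∈ broadcasters f, f v = cost f :=
  sum_filter_of_ne fun _ _ h => Nat.one_le_iff_ne_zero.2 h

lemma card_broadcasters_le_cost (f : V → ℕ) : #(broadcasters f) ≤ cost f := by
  have := card_nsmul_le_sum (broadcasters f) f 1 fun v hv => (mem_filter.1 hv).2
  rwa [sum_broadcasters, smul_eq_mul, mul_one] at this

end General

section Path

variable {n : ℕ}

lemma pathGraph_dist_le_of_add_eq : ∀ (k : ℕ) {u v : Fin n}, (u : ℕ) + k = v →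
    (pathGraph n).dist u v ≤ k
  | 0, u, v, h => by simp [Fin.ext h]
  | k + 1, u, v, h => by
    let w : Fin n := ⟨u + k, by omega⟩
    have hwv : (pathGraph n).Adj w v := by rw [pathGraph_adj]; exact .inl (by simp [w]; omega)
    have := pathGraph_dist_le_of_add_eq k (v := w) rfl
    rcases hwv.diff_dist_adj (u := u) with h' | h' | h' <;> omega

lemma le_length_of_pathGraph_walk {u v : Fin n} (p : (pathGraph n).Walk u v) :
    (u : ℕ) - v + (v - u) ≤ p.length := by
  induction p with
  | nil => simp
  | cons h _ ih => rw [pathGraph_adj] at h; simp only [Walk.length_cons]; omega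

theorem pathGraph_dist (u v : Fin n) : (pathGraph n).dist u v = (u : ℕ) - v + (v - u) := by
  refine le_antisymm ?_ ?_
  · rcases le_total (u : ℕ) v with h | h
    · exact (pathGraph_dist_le_of_add_eq (v - u) (by omega)).trans (by omega)
    · rw [dist_comm]; exact (pathGraph_dist_le_of_add_eq (u - v) (by omega)).trans (by omega)
  · obtain ⟨p, hp⟩ := (pathGraph_preconnected n u v).exists_walk_length_eq_dist
    exact hp ▸ le_length_of_pathGraph_walk p

theorem pathGraph_ecc (v : Fin n) : ecc (pathGraph n) v = max (v : ℕ) (n - 1 - v) := by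
  refine le_antisymm (Finset.sup_le fun u _ => ?_) (max_le ?_ ?_)
  · rw [pathGraph_dist]; omega
  · have := dist_le_ecc (G := pathGraph n) v ⟨0, v.pos⟩
    simp only [pathGraph_dist] at this
    omega
  · have := dist_le_ecc (G := pathGraph n) v ⟨n - 1, Nat.sub_lt v.pos one_pos⟩
    simp only [pathGraph_dist] at this
    omega

lemma exists_between_pathGraph {u v : Fin n} {a b : ℕ} (h : (u : ℕ) - v + (v - u) ≤ a + b) :
    ∃ w : Fin n, (u : ℕ) - w + (w - u) ≤ a ∧ (w : ℕ) - v + (v - w) ≤ b := by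
  rcases le_total (u : ℕ) v with huv | huv
  · exact ⟨⟨min (u + a) v, by omega⟩, by dsimp only; omega, by dsimp only; omega⟩
  · exact ⟨⟨max (u - a) v, by omega⟩, by dsimp only; omega, by dsimp only; omega⟩

variable {f : Fin n → ℕ}

theorem IsPacking.add_lt_pathGraph (hf : IsPacking (pathGraph n) f) {v t : Fin n}
    (hv : 1 ≤ f v) (ht : 1 ≤ f t) (hvt : v ≠ t) : f v + f t < (v : ℕ) - t + (t - v) := by
  by_contra! h
  obtain ⟨w, hwv, hwt⟩ := exists_between_pathGraph h
  exact hvt (hf.2 w ⟨hv, by rw [pathGraph_dist]; omega⟩ ⟨ht, by rw [pathGraph_dist]; omega⟩)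

theorem isMaximalPacking_pathGraph_iff :
    IsMaximalPacking (pathGraph n) f ↔ IsPacking (pathGraph n) f ∧
      ∀ v, f v < ecc (pathGraph n) v →
        ∃ t ≠ v, 1 ≤ f t ∧ (v : ℕ) - t + (t - v) ≤ f v + f t + 1 := by
  refine isMaximalPacking_iff.trans <| and_congr_right fun _ =>
    forall₂_congr fun v _ => ⟨?_, ?_⟩
  · rintro ⟨w, t, htv, ⟨ht, hwt⟩, hwv⟩
    rw [pathGraph_dist] at hwt hwv
    exact ⟨t, htv, ht, by omega⟩
  · rintro ⟨t, htv, ht, hvt⟩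
    obtain ⟨w, hvw, hwt⟩ :=
      exists_between_pathGraph (u := v) (v := t) (a := f v + 1) (b := f t) (by omega)
    exact ⟨w, t, htv, ⟨ht, by rw [pathGraph_dist]; omega⟩, by rw [pathGraph_dist]; omega⟩

/-- The balls around `p.1 < p.2` are disjoint but adjacent. -/
def touchingPairs (f : Fin n → ℕ) : Finset (Fin n × Fin n) :=
  {p | 1 ≤ f p.1 ∧ 1 ≤ f p.2 ∧ (p.1 : ℕ) + f p.1 + f p.2 + 1 = p.2}

/-- `(v, true)` stands for the right end of the ball around `v`, `(v, false)` for its left end. -/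
def touchingSides (f : Fin n → ℕ) : Finset (Fin n × Bool) :=
  (touchingPairs f).image (fun p => (p.1, true)) ∪
    (touchingPairs f).image (fun p => (p.2, false))

/-- The vertex just outside a side of a ball (a junk `0` if the ball contains vertex `0`). -/
def outerNeighbor (f : Fin n → ℕ) (s : Fin n × Bool) : ℕ :=
  if s.2 then s.1 + f s.1 + 1 else s.1 - f s.1 - 1

lemma IsPacking.injOn_fst_touchingPairs (hf : IsPacking (pathGraph n) f) :
    Set.InjOn Prod.fst (touchingPairs f : Set (Fin n × Fin n)) := by
  rintro ⟨v, y⟩ h ⟨v', y'⟩ h' (rfl : v = v')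
  simp only [touchingPairs, coe_filter, mem_univ, true_and, Set.mem_ofPred_eq] at h h'
  by_contra hne
  have := hf.add_lt_pathGraph h.2.1 h'.2.1 (fun hy => hne (by rw [hy]))
  omega

lemma IsPacking.injOn_snd_touchingPairs (hf : IsPacking (pathGraph n) f) :
    Set.InjOn Prod.snd (touchingPairs f : Set (Fin n × Fin n)) := by
  rintro ⟨v, y⟩ h ⟨v', y'⟩ h' (rfl : y = y')
  simp only [touchingPairs, coe_filter, mem_univ, true_and, Set.mem_ofPred_eq] at h h'
  by_contra hne
  have := hf.add_lt_pathGraph h.1 h'.1 (fun hv => hne (by rw [hv]))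
  omega

lemma IsPacking.card_touchingSides (hf : IsPacking (pathGraph n) f) :
    #(touchingSides f) = 2 * #(touchingPairs f) := by
  rw [touchingSides, card_union_of_disjoint, card_image_of_injOn, card_image_of_injOn, two_mul]
  · exact fun p hp q hq h => hf.injOn_snd_touchingPairs hp hq (Prod.mk.inj h).1
  · exact fun p hp q hq h => hf.injOn_fst_touchingPairs hp hq (Prod.mk.inj h).1
  · simp [Finset.disjoint_left]

lemma mem_touchingSides {v : Fin n} {b : Bool} : (v, b) ∈ touchingSides f ↔ 1 ≤ f v ∧
    ∃ y : Fin n, 1 ≤ f y ∧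
      if b then (v : ℕ) + f v + f y + 1 = y else (y : ℕ) + f y + f v + 1 = v := by
  cases b <;> simp [touchingSides, touchingPairs, and_left_comm]

lemma touchingSides_subset : touchingSides f ⊆ broadcasters f ×ˢ univ := fun s hs => by
  simpa [broadcasters] using (mem_touchingSides.1 hs).1

lemma range_subset_balls_union_outerNeighbor (hn : 2 ≤ n)
    (hf : IsMaximalPacking (pathGraph n) f) :
    range n ⊆ (broadcasters f).biUnion (fun v => Icc (v - f v) (v + f v)) ∪
      ((broadcasters f ×ˢ univ) \ touchingSides f).image (outerNeighbor f) := by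
  intro x hx
  obtain ⟨u, rfl⟩ : ∃ u : Fin n, (u : ℕ) = x := ⟨⟨x, mem_range.1 hx⟩, rfl⟩
  simp only [mem_union, mem_biUnion, mem_Icc, mem_image, mem_sdiff, mem_product, mem_univ,
    and_true]
  by_cases! hcov : ∃ v ∈ broadcasters f, (v : ℕ) - f v ≤ u ∧ (u : ℕ) ≤ v + f v
  · exact .inl hcov
  have hfu : f u = 0 := by
    by_contra h
    have := hcov u (mem_filter.2 ⟨mem_univ _, by omega⟩)
    omega
  -- Raising `f u` to `1` must break the packing, so `u` is next to the ball of some `t`.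
  obtain ⟨t, -, ht, hut⟩ := (isMaximalPacking_pathGraph_iff.1 hf).2 u
    (by rw [pathGraph_ecc]; omega)
  have htS : t ∈ broadcasters f := mem_filter.2 ⟨mem_univ _, ht⟩
  have := hcov t htS
  refine .inr ⟨(t, decide ((t : ℕ) < u)), ⟨htS, fun hside => ?_⟩, ?_⟩
  · obtain ⟨-, y, hy, hty⟩ := mem_touchingSides.1 hside
    have := hcov y (mem_filter.2 ⟨mem_univ _, hy⟩)
    simp only [decide_eq_true_eq] at hty
    split_ifs at hty <;> omega
  · simp only [outerNeighbor, decide_eq_true_eq]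
    split_ifs <;> omega

lemma add_two_mul_card_touchingPairs_le (hn : 2 ≤ n) (hf : IsMaximalPacking (pathGraph n) f) :
    n + 2 * #(touchingPairs f) ≤ 2 * cost f + 3 * #(broadcasters f) := by
  have hballs : ∑ v ∈ broadcasters f, #(Icc ((v : ℕ) - f v) (v + f v)) ≤
      2 * cost f + #(broadcasters f) := by
    rw [← sum_broadcasters, mul_sum, card_eq_sum_ones, ← sum_add_distrib]
    exact sum_le_sum fun v _ => by simp only [Nat.card_Icc]; omega
  have hsides : #((broadcasters f ×ˢ univ) \ touchingSides f) + 2 * #(touchingPairs f) =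
      2 * #(broadcasters f) := by
    rw [← hf.1.card_touchingSides, card_sdiff_add_card_eq_card touchingSides_subset,
      card_product, card_univ, Fintype.card_bool, mul_comm]
  have hcover := (card_le_card (range_subset_balls_union_outerNeighbor hn hf)).trans
    ((card_union_le _ _).trans (add_le_add (card_biUnion_le.trans hballs) card_image_le))
  rw [card_range] at hcover
  omega

lemma card_broadcasters_le_two_mul_card_touchingPairs (hf : IsMaximalPacking (pathGraph n) f)
    (hsat : ∀ v, 1 ≤ f v → f v < ecc (pathGraph n) v) :
    #(broadcasters f) ≤ 2 * #(touchingPairs f) := by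
  have hsub : broadcasters f ⊆
      (touchingPairs f).image Prod.fst ∪ (touchingPairs f).image Prod.snd := by
    intro v hv
    have hv1 := (mem_filter.1 hv).2
    obtain ⟨t, htv, ht, hvt⟩ := (isMaximalPacking_pathGraph_iff.1 hf).2 v (hsat v hv1)
    have := hf.1.add_lt_pathGraph hv1 ht htv.symm
    simp only [mem_union, mem_image, touchingPairs, mem_filter, mem_univ, true_and]
    rcases lt_or_gt_of_ne (Fin.val_ne_of_ne htv) with h | h
    · exact .inr ⟨(t, v), ⟨ht, hv1, by dsimp only; omega⟩, rfl⟩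
    · exact .inl ⟨(v, t), ⟨hv1, ht, by dsimp only; omega⟩, rfl⟩
  calc #(broadcasters f) ≤ _ := card_le_card hsub
    _ ≤ _ := card_union_le _ _
    _ ≤ _ := add_le_add card_image_le card_image_le
    _ = _ := (two_mul _).symm

theorem le_cost_of_isMaximalPacking_pathGraph (hn : 2 ≤ n)
    (hf : IsMaximalPacking (pathGraph n) f) : (n + 4) / 8 + (n + 7) / 8 ≤ cost f := by
  by_cases! hsat : ∃ v, 1 ≤ f v ∧ ecc (pathGraph n) v ≤ f v
  · obtain ⟨v, hv, hecc⟩ := hsat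
    have hfv : f v ≤ cost f := single_le_sum (fun _ _ => Nat.zero_le _) (mem_univ v)
    rw [pathGraph_ecc] at hecc
    omega
  · have := add_two_mul_card_touchingPairs_le hn hf
    have := card_broadcasters_le_two_mul_card_touchingPairs hf hsat
    have := card_broadcasters_le_cost f
    obtain ⟨m, hm | hm⟩ := Nat.even_or_odd' (cost f) <;> omega

end Path

section Construction

variable {n x y : ℕ}

def IsPathCenter (n x : ℕ) : Prop :=
  x < 8 * (n / 8) ∧ (x % 8 = 2 ∨ x % 8 = 5) ∨
  1 ≤ n % 8 ∧ n % 8 ≤ 6 ∧ x = 8 * (n / 8) ∨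
  4 ≤ n % 8 ∧ n % 8 ≤ 6 ∧ x = 8 * (n / 8) + 3 ∨
  n % 8 = 7 ∧ (x = 8 * (n / 8) + 1 ∨ x = 8 * (n / 8) + 4)

instance (n : ℕ) : DecidablePred (IsPathCenter n) := fun _ => by
  unfold IsPathCenter; infer_instance

lemma IsPathCenter.add_three_le (hx : IsPathCenter n x) (hy : IsPathCenter n y) (hxy : x < y) :
    x + 3 ≤ y := by
  unfold IsPathCenter at hx hy; omega

lemma IsPathCenter.exists_add_three (hn : 4 ≤ n) (hx : IsPathCenter n x) :
    ∃ y < n, IsPathCenter n y ∧ (x + 3 = y ∨ y + 3 = x) := by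
  unfold IsPathCenter at hx ⊢
  rcases hx with ⟨hx, h | h⟩ | ⟨hr, hr', rfl⟩ | ⟨hr, hr', rfl⟩ | ⟨hr, rfl | rfl⟩
  · exact ⟨x + 3, by omega⟩
  · exact ⟨x - 3, by omega⟩
  · rcases le_or_gt 4 (n % 8) with hr4 | hr4
    · exact ⟨8 * (n / 8) + 3, by omega⟩
    · exact ⟨8 * (n / 8) - 3, by omega⟩
  · exact ⟨8 * (n / 8), by omega⟩
  · exact ⟨8 * (n / 8) + 4, by omega⟩
  · exact ⟨8 * (n / 8) + 1, by omega⟩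

lemma exists_isPathCenter_near (hx : x < n) :
    ∃ y < n, IsPathCenter n y ∧ x ≤ y + 2 ∧ y ≤ x + 2 := by
  unfold IsPathCenter
  rcases lt_or_ge x (8 * (n / 8)) with h | h
  · rcases le_or_gt (x % 8) 3 with h' | h'
    · exact ⟨8 * (x / 8) + 2, by omega⟩
    · exact ⟨8 * (x / 8) + 5, by omega⟩
  · rcases le_or_gt (n % 8) 3 with hr | hr
    · exact ⟨8 * (n / 8), by omega⟩
    rcases le_or_gt (n % 8) 6 with hr' | hr'
    · rcases le_or_gt x (8 * (n / 8) + 2) with h' | h'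
      · exact ⟨8 * (n / 8), by omega⟩
      · exact ⟨8 * (n / 8) + 3, by omega⟩
    · rcases le_or_gt x (8 * (n / 8) + 3) with h' | h'
      · exact ⟨8 * (n / 8) + 1, by omega⟩
      · exact ⟨8 * (n / 8) + 4, by omega⟩

lemma isPathCenter_add_eight : IsPathCenter (n + 8) (x + 8) ↔ IsPathCenter n x := by
  unfold IsPathCenter; omega

lemma isPathCenter_add_eight_iff_of_lt (hx : x < 8) :
    IsPathCenter (n + 8) x ↔ x = 2 ∨ x = 5 := by
  unfold IsPathCenter; omega

theorem count_isPathCenter (n : ℕ) :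
    Nat.count (IsPathCenter n) n = (n + 4) / 8 + (n + 7) / 8 := by
  induction n using Nat.strong_induction_on with
  | _ n ih =>
    rcases lt_or_ge n 8 with hn | hn
    · interval_cases n <;> decide
    · obtain ⟨m, rfl⟩ : ∃ m, n = m + 8 := ⟨n - 8, by omega⟩
      rw [Nat.count_add']
      simp only [isPathCenter_add_eight]
      rw [ih m (by omega)]
      simp [Nat.count_succ, isPathCenter_add_eight_iff_of_lt]
      omega

def pathCenterBroadcast (n : ℕ) (v : Fin n) : ℕ := if IsPathCenter n v then 1 else 0

theorem cost_pathCenterBroadcast (n : ℕ) :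
    cost (pathCenterBroadcast n) = (n + 4) / 8 + (n + 7) / 8 := by
  rw [← count_isPathCenter, Nat.count_eq_card_filter_range, card_filter, cost]
  exact Fin.sum_univ_eq_sum_range (fun x => if IsPathCenter n x then 1 else 0) n

theorem isMaximalPacking_pathCenterBroadcast (hn : 4 ≤ n) :
    IsMaximalPacking (pathGraph n) (pathCenterBroadcast n) := by
  have hcenter {v : Fin n} : 1 ≤ pathCenterBroadcast n v ↔ IsPathCenter n v := by
    unfold pathCenterBroadcast; split_ifs <;> simpa
  have hle (v : Fin n) : pathCenterBroadcast n v ≤ 1 := by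
    unfold pathCenterBroadcast; split_ifs <;> simp
  refine isMaximalPacking_pathGraph_iff.2
    ⟨⟨fun v => ?_, fun u x hx y hy => ?_⟩, fun v _ => ?_⟩
  · rw [pathGraph_ecc]; have := hle v; omega
  · obtain ⟨hx, hux⟩ := hx
    obtain ⟨hy, huy⟩ := hy
    rw [pathGraph_dist] at hux huy
    have := hle x; have := hle y
    by_contra hxy
    rcases lt_or_gt_of_ne (Fin.val_ne_of_ne hxy) with h | h
    · have := (hcenter.1 hx).add_three_le (hcenter.1 hy) h; omega
    · have := (hcenter.1 hy).add_three_le (hcenter.1 hx) h; omega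
  · by_cases hv : IsPathCenter n v
    · obtain ⟨t, ht, hct, hvt⟩ := hv.exists_add_three hn
      refine ⟨⟨t, ht⟩, Fin.ne_of_val_ne (by dsimp only; omega), hcenter.2 hct, ?_⟩
      simp only [pathCenterBroadcast, if_pos hv, if_pos hct]; omega
    · obtain ⟨t, ht, hct, hvt⟩ := exists_isPathCenter_near v.isLt
      refine ⟨⟨t, ht⟩, fun h => hv (h ▸ hct), hcenter.2 hct, ?_⟩
      simp only [pathCenterBroadcast, if_neg hv, if_pos hct]; omega

theorem exists_isMaximalPacking_pathGraph_cost_eq (hn : 2 ≤ n) :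
    ∃ f, IsMaximalPacking (pathGraph n) f ∧ cost f = (n + 4) / 8 + (n + 7) / 8 := by
  rcases lt_or_ge n 4 with hn4 | hn4
  · let c : Fin n := ⟨1, by omega⟩
    have hc : ecc (pathGraph n) c = 1 := by rw [pathGraph_ecc]; simp only [c]; omega
    refine ⟨Pi.single c (ecc (pathGraph n) c), isMaximalPacking_single_ecc hc.ge, ?_⟩
    rw [cost, Fintype.sum_pi_single', hc]
    omega
  · exact ⟨_, isMaximalPacking_pathCenterBroadcast hn4, cost_pathCenterBroadcast n⟩

end Construction

end Broadcast

open Broadcast in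
/-- For every integer n ≥ 2: p_b(P_n) = n/4 if n ≡ 0 (mod 8);
p_b(P_n) = 2⌊n/8⌋ + 1 if n ≡ 1, 2, 3 (mod 8);
p_b(P_n) = 2⌊n/8⌋ + 2 if n ≡ 4, 5, 6, 7 (mod 8). -/
theorem lowerBroadcastPacking_pathGraph (n : ℕ) (hn : 2 ≤ n) :
    (n % 8 = 0 → lowerBroadcastPacking (SimpleGraph.pathGraph n) = n / 4) ∧
    (n % 8 = 1 ∨ n % 8 = 2 ∨ n % 8 = 3 →
      lowerBroadcastPacking (SimpleGraph.pathGraph n) = 2 * (n / 8) + 1) ∧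
    (n % 8 = 4 ∨ n % 8 = 5 ∨ n % 8 = 6 ∨ n % 8 = 7 →
      lowerBroadcastPacking (SimpleGraph.pathGraph n) = 2 * (n / 8) + 2) := by
  have hpb : lowerBroadcastPacking (pathGraph n) = (n + 4) / 8 + (n + 7) / 8 := by
    refine IsLeast.csInf_eq ⟨exists_isMaximalPacking_pathGraph_cost_eq hn, ?_⟩
    rintro _ ⟨f, hf, rfl⟩
    exact le_cost_of_isMaximalPacking_pathGraph hn hf
  rw [hpb]
  omega
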